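/- Let (X,d) be a compact metric space and let (X, f_{1,∞}) be a non-autonomous discrete system such that f_{1,∞} is feeble open, each f_n is surjective, (f_n) converges uniformly to a continuous map f : X → X, and the compositions (f_r^k) converge collectively to (f^k). If f_{1,∞} is thickly sensitive and transitive, then f_{1,∞} is multi-sensitive. -/

import Mathlib

open Set Filter

/-- `nds f i n` is the `n`-step composition `f_i^n = f (i+n-1) ∘ ⋯ ∘ f i`, with `nds f i 0 = id`. -/
def nds {X : Type*} (f : ℕ → X → X) (i : ℕ) : ℕ → X → X
  | 0 => id
  | n + 1 => f (i + n) ∘ nds f i n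

section TopDefs

variable {X : Type*} [TopologicalSpace X]

/-- The NDS `f_{1,∞}` is (topologically) transitive. -/
def NDSTransitive (f : ℕ → X → X) : Prop :=
  ∀ U V : Set X, IsOpen U → U.Nonempty → IsOpen V → V.Nonempty →
    ∃ n : ℕ, 0 < n ∧ (nds f 1 n '' U ∩ V).Nonempty

/-- The NDS `f_{1,∞}` is mixing. -/
def NDSMixing (f : ℕ → X → X) : Prop :=
  ∀ U V : Set X, IsOpen U → U.Nonempty → IsOpen V → V.Nonempty →
    ∃ N : ℕ, ∀ n : ℕ, N ≤ n → (nds f 1 n '' U ∩ V).Nonempty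

/-- The NDS `f_{1,∞}` is weakly mixing. -/
def NDSWeaklyMixing (f : ℕ → X → X) : Prop :=
  ∀ U₁ U₂ V₁ V₂ : Set X, IsOpen U₁ → U₁.Nonempty → IsOpen U₂ → U₂.Nonempty →
    IsOpen V₁ → V₁.Nonempty → IsOpen V₂ → V₂.Nonempty →
    ∃ n : ℕ, 0 < n ∧ (nds f 1 n '' U₁ ∩ V₁).Nonempty ∧ (nds f 1 n '' U₂ ∩ V₂).Nonempty

/-- The NDS `f_{1,∞}` is multi-transitive. -/
def NDSMultiTransitive (f : ℕ → X → X) : Prop :=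
  ∀ m : ℕ, 0 < m → ∀ U V : Fin m → Set X,
    (∀ j, IsOpen (U j)) → (∀ j, (U j).Nonempty) →
    (∀ j, IsOpen (V j)) → (∀ j, (V j).Nonempty) →
    ∃ l : ℕ, 0 < l ∧ ∀ j : Fin m, (nds f 1 (l * (j.1 + 1)) '' U j ∩ V j).Nonempty

/-- The NDS `f_{1,∞}` is totally transitive. -/
def NDSTotallyTransitive (f : ℕ → X → X) : Prop :=
  ∀ k : ℕ, 0 < k → ∀ U V : Set X, IsOpen U → U.Nonempty → IsOpen V → V.Nonempty →
    ∃ n : ℕ, 0 < n ∧ (nds f 1 (n * k) '' U ∩ V).Nonempty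

/-- The NDS `f_{1,∞}` is minimal: every orbit is dense. -/
def NDSMinimal (f : ℕ → X → X) : Prop :=
  ∀ x : X, Dense (Set.range fun n : ℕ => nds f 1 n x)

/-- The NDS `f_{1,∞}` is feeble open. -/
def FeebleOpen (f : ℕ → X → X) : Prop :=
  ∀ i : ℕ, 1 ≤ i → ∀ U : Set X, IsOpen U → U.Nonempty → (interior (f i '' U)).Nonempty

/-- A set of positive integers is syndetic (has bounded gaps). -/
def SyndeticSet (A : Set ℕ) : Prop :=
  ∃ M : ℕ, ∀ i : ℕ, 1 ≤ i → ∃ j ∈ A, i ≤ j ∧ j ≤ i + M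

/-- A set of positive integers is thick (contains arbitrarily long runs). -/
def ThickSet (A : Set ℕ) : Prop :=
  ∀ p : ℕ, ∃ n : ℕ, ∀ j : ℕ, n ≤ j → j ≤ n + p → j ∈ A

/-- The NDS `f_{1,∞}` is syndetically transitive. -/
def NDSSyndeticallyTransitive (f : ℕ → X → X) : Prop :=
  ∀ U V : Set X, IsOpen U → U.Nonempty → IsOpen V → V.Nonempty →
    SyndeticSet {n : ℕ | 0 < n ∧ (nds f 1 n '' U ∩ V).Nonempty}

/-- The NDS `f_{1,∞}` has dense periodic points. -/
def NDSDensePeriodicPoints (f : ℕ → X → X) : Prop :=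
  Dense {x : X | ∃ k : ℕ, 0 < k ∧ ∀ n : ℕ, 0 < n → nds f 1 (k * n) x = x}

/-- The NDS `f_{k,∞}` is strongly transitive. -/
def NDSStronglyTransitiveFrom (f : ℕ → X → X) (k : ℕ) : Prop :=
  ∀ U : Set X, IsOpen U → U.Nonempty →
    ∃ M : ℕ, 0 < M ∧ (⋃ i ∈ Set.Icc 1 M, nds f k i '' U) = Set.univ

/-- An autonomous map is transitive. -/
def MapTransitive {Y : Type*} [TopologicalSpace Y] (g : Y → Y) : Prop :=
  ∀ U V : Set Y, IsOpen U → U.Nonempty → IsOpen V → V.Nonempty →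
    ∃ n : ℕ, 0 < n ∧ (g^[n] '' U ∩ V).Nonempty

/-- An autonomous map is weakly mixing. -/
def MapWeaklyMixing {Y : Type*} [TopologicalSpace Y] (g : Y → Y) : Prop :=
  ∀ U₁ U₂ V₁ V₂ : Set Y, IsOpen U₁ → U₁.Nonempty → IsOpen U₂ → U₂.Nonempty →
    IsOpen V₁ → V₁.Nonempty → IsOpen V₂ → V₂.Nonempty →
    ∃ n : ℕ, 0 < n ∧ (g^[n] '' U₁ ∩ V₁).Nonempty ∧ (g^[n] '' U₂ ∩ V₂).Nonempty

/-- An autonomous map is totally transitive. -/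
def MapTotallyTransitive {Y : Type*} [TopologicalSpace Y] (g : Y → Y) : Prop :=
  ∀ k : ℕ, 0 < k → ∀ U V : Set Y, IsOpen U → U.Nonempty → IsOpen V → V.Nonempty →
    ∃ n : ℕ, 0 < n ∧ (g^[n * k] '' U ∩ V).Nonempty

/-- An autonomous map is syndetically transitive. -/
def MapSyndeticallyTransitive {Y : Type*} [TopologicalSpace Y] (g : Y → Y) : Prop :=
  ∀ U V : Set Y, IsOpen U → U.Nonempty → IsOpen V → V.Nonempty →
    SyndeticSet {n : ℕ | 0 < n ∧ (g^[n] '' U ∩ V).Nonempty}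

/-- An autonomous map is minimal. -/
def MapMinimal {Y : Type*} [TopologicalSpace Y] (g : Y → Y) : Prop :=
  ∀ x : Y, Dense (Set.range fun n : ℕ => g^[n] x)

end TopDefs

section MetricDefs

variable {X : Type*} [MetricSpace X]

/-- The compositions `(f_r^k)` converge collectively to `(f^k)` (w.r.t. the supremum metric). -/
def CollectivelyConverges (f : ℕ → X → X) (g : X → X) : Prop :=
  ∀ ε : ℝ, 0 < ε → ∃ r₀ : ℕ, ∀ r : ℕ, r₀ ≤ r → ∀ k : ℕ, 1 ≤ k → ∀ x : X,
    dist (nds f r k x) (g^[k] x) < ε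

/-- `N(U, δ)`: the times at which the NDS is `δ`-sensitive on `U`. -/
def SensSet (f : ℕ → X → X) (U : Set X) (δ : ℝ) : Set ℕ :=
  {n : ℕ | 0 < n ∧ ∃ x ∈ U, ∃ y ∈ U, δ < dist (nds f 1 n x) (nds f 1 n y)}

/-- The NDS `f_{1,∞}` is multi-sensitive. -/
def NDSMultiSensitive (f : ℕ → X → X) : Prop :=
  ∃ δ : ℝ, 0 < δ ∧ ∀ m : ℕ, 0 < m → ∀ U : Fin m → Set X,
    (∀ i, IsOpen (U i)) → (∀ i, (U i).Nonempty) → (⋂ i, SensSet f (U i) δ).Nonempty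

/-- The NDS `f_{1,∞}` is thickly sensitive. -/
def NDSThicklySensitive (f : ℕ → X → X) : Prop :=
  ∃ δ : ℝ, 0 < δ ∧ ∀ U : Set X, IsOpen U → U.Nonempty → ThickSet (SensSet f U δ)

/-- The NDS `f_{1,∞}` is syndetically sensitive. -/
def NDSSyndeticallySensitive (f : ℕ → X → X) : Prop :=
  ∃ δ : ℝ, 0 < δ ∧ ∀ U : Set X, IsOpen U → U.Nonempty → SyndeticSet (SensSet f U δ)

/-- The NDS `f_{1,∞}` is mildly mixing: its product with every transitive NDS on a compact
metric space is transitive. -/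
def NDSMildlyMixing (f : ℕ → X → X) : Prop :=
  ∀ (Y : Type*) [MetricSpace Y] [CompactSpace Y] (g : ℕ → Y → Y),
    (∀ n : ℕ, 1 ≤ n → Continuous (g n)) → NDSTransitive g →
    NDSTransitive (fun n (p : X × Y) => (f n p.1, g n p.2))

/-- The NDS `f_{1,∞}` is Li–Yorke chaotic. -/
def LiYorkeChaotic (f : ℕ → X → X) : Prop :=
  ∃ S : Set X, ¬S.Countable ∧ ∀ x ∈ S, ∀ y ∈ S, x ≠ y →
    Filter.liminf (fun n : ℕ => dist (nds f 1 n x) (nds f 1 n y)) Filter.atTop = 0 ∧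
    0 < Filter.limsup (fun n : ℕ => dist (nds f 1 n x) (nds f 1 n y)) Filter.atTop

end MetricDefs

/-!
Everything is transferred through the limit map `F`. Collective convergence makes `F^k` uniformly
`δ/8`-close to the tail compositions `f_{1+ρ}^k`. Thick sensitivity rules out isolated points,
so hitting times of the transitive system `f_{1,∞}` are unbounded; by surjectivity the tails
`f_{1+ρ,∞}` are transitive too, and hence so is `F`. Likewise `F` inherits thick sensitivity with
constant `3δ/4`. Given `U_1, …, U_m`, the sets `f_1^ρ(U_i)` have interior (feeble openness), and
transitivity of `F` gives one open `W` and times `k_i` with `F^{k_i}(W) ⊆ f_1^ρ(U_i)`. A run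
`M, …, M + max k_i` of sensitive times of `F` on `W` then makes `ρ + M` a common time at which
every `U_i` is `δ/2`-sensitive for `f_{1,∞}`.
-/

open Topology

section Compositions

variable {X : Type*} (f : ℕ → X → X)

lemma nds_add (i a b : ℕ) (x : X) : nds f i (a + b) x = nds f (i + a) b (nds f i a x) := by
  induction b with
  | zero => rfl
  | succ b ih =>
    change f (i + (a + b)) (nds f i (a + b) x) = f (i + a + b) (nds f (i + a) b (nds f i a x))
    rw [ih, Nat.add_assoc]

variable {f}

lemma continuous_nds [TopologicalSpace X] (hcont : ∀ n, 1 ≤ n → Continuous (f n)) {i : ℕ}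
    (hi : 1 ≤ i) (n : ℕ) : Continuous (nds f i n) := by
  induction n with
  | zero => exact continuous_id
  | succ n ih => exact (hcont (i + n) (by omega)).comp ih

lemma surjective_nds (hsurj : ∀ n, 1 ≤ n → Function.Surjective (f n)) {i : ℕ} (hi : 1 ≤ i)
    (n : ℕ) : Function.Surjective (nds f i n) := by
  induction n with
  | zero => exact Function.surjective_id
  | succ n ih => exact (hsurj (i + n) (by omega)).comp ih

lemma FeebleOpen.interior_image_nds_nonempty [TopologicalSpace X] (hfo : FeebleOpen f) {i : ℕ}
    (hi : 1 ≤ i) (n : ℕ) {U : Set X} (hU : IsOpen U) (hUne : U.Nonempty) :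
    (interior (nds f i n '' U)).Nonempty := by
  induction n with
  | zero => simpa [nds, hU.interior_eq] using hUne
  | succ n ih =>
    refine (hfo (i + n) (by omega) _ isOpen_interior ih).mono (interior_mono ?_)
    rw [show nds f i (n + 1) = f (i + n) ∘ nds f i n from rfl, image_comp]
    exact image_mono interior_subset

end Compositions

section Transitivity

variable {X : Type*} [TopologicalSpace X] {f : ℕ → X → X}

lemma NDSTransitive.exists_lt_image_nds_inter_nonempty [T3Space X] [∀ x : X, (𝓝[≠] x).NeBot]
    (htrans : NDSTransitive f) (hcont : ∀ n, 1 ≤ n → Continuous (f n)) {A B : Set X}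
    (hA : IsOpen A) (hAne : A.Nonempty) (hB : IsOpen B) (hBne : B.Nonempty) (N : ℕ) :
    ∃ n, N < n ∧ (nds f 1 n '' A ∩ B).Nonempty := by
  obtain ⟨a, ha⟩ := hAne
  set S := (fun n => nds f 1 n a) '' Iic N
  have hS : S.Finite := (finite_Iic N).image _
  obtain ⟨b, hbB, -, hbS⟩ := (dense_univ.sdiff_finite hS).inter_open_nonempty B hB hBne
  obtain ⟨C, hC, hCclosed, hCsub⟩ :=
    exists_mem_nhds_isClosed_subset ((hB.sdiff hS.isClosed).mem_nhds ⟨hbB, hbS⟩)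
  set A' := A ∩ ⋂ n ∈ Iic N, nds f 1 n ⁻¹' Cᶜ
  have hA' : IsOpen A' := hA.inter <| (finite_Iic N).isOpen_biInter fun n _ =>
    hCclosed.isOpen_compl.preimage (continuous_nds hcont le_rfl n)
  have haA' : a ∈ A' := ⟨ha, mem_iInter₂.2 fun n hn hC => (hCsub hC).2 ⟨n, hn, rfl⟩⟩
  obtain ⟨n, -, _, ⟨x, hxA', rfl⟩, hxC⟩ :=
    htrans A' (interior C) hA' ⟨a, haA'⟩ isOpen_interior ⟨b, mem_interior_iff_mem_nhds.2 hC⟩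
  refine ⟨n, ?_, ⟨_, ⟨x, hxA'.1, rfl⟩, (hCsub (interior_subset hxC)).1⟩⟩
  by_contra! hn
  exact mem_iInter₂.1 hxA'.2 n hn (interior_subset hxC)

lemma NDSTransitive.exists_image_nds_inter_nonempty [T3Space X] [∀ x : X, (𝓝[≠] x).NeBot]
    (htrans : NDSTransitive f) (hcont : ∀ n, 1 ≤ n → Continuous (f n))
    (hsurj : ∀ n, 1 ≤ n → Function.Surjective (f n)) (ρ : ℕ) {A B : Set X}
    (hA : IsOpen A) (hAne : A.Nonempty) (hB : IsOpen B) (hBne : B.Nonempty) :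
    ∃ k, 1 ≤ k ∧ (nds f (1 + ρ) k '' A ∩ B).Nonempty := by
  have hA' : (nds f 1 ρ ⁻¹' A).Nonempty := hAne.preimage (surjective_nds hsurj le_rfl ρ)
  obtain ⟨n, hρn, _, ⟨x, hx, rfl⟩, hxB⟩ := htrans.exists_lt_image_nds_inter_nonempty hcont
    (hA.preimage (continuous_nds hcont le_rfl ρ)) hA' hB hBne ρ
  obtain ⟨k, rfl⟩ := Nat.exists_eq_add_of_lt hρn
  refine ⟨k + 1, by omega, _, ⟨nds f 1 ρ x, hx, rfl⟩, ?_⟩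
  rwa [← nds_add, ← Nat.add_assoc]

lemma MapTransitive.exists_isOpen_mapsTo_iterate [Nonempty X] {g : X → X} (hg : MapTransitive g)
    (hgc : Continuous g) {ι : Type*} (V : ι → Set X) (hV : ∀ i, IsOpen (V i))
    (hVne : ∀ i, (V i).Nonempty) (s : Finset ι) :
    ∃ W : Set X, IsOpen W ∧ W.Nonempty ∧ ∃ k : ι → ℕ, ∀ i ∈ s, MapsTo g^[k i] W (V i) := by
  classical
  induction s using Finset.induction_on with
  | empty => exact ⟨univ, isOpen_univ, univ_nonempty, 0, by simp⟩
  | insert j s _ ih =>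
    obtain ⟨W, hW, hWne, k, hk⟩ := ih
    obtain ⟨l, -, hl⟩ := hg W (V j) hW hWne (hV j) (hVne j)
    refine ⟨W ∩ g^[l] ⁻¹' V j, hW.inter ((hV j).preimage (hgc.iterate l)), ?_,
      Function.update k j l, ?_⟩
    · obtain ⟨_, ⟨w, hw, rfl⟩, hwV⟩ := hl
      exact ⟨w, hw, hwV⟩
    · intro i hi w hw
      by_cases hij : i = j
      · subst hij
        simpa using hw.2
      · rw [Function.update_of_ne hij]
        exact hk i ((Finset.mem_insert.1 hi).resolve_left hij) hw.1

end Transitivity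

section CollectiveConvergence

variable {X : Type*} [MetricSpace X] {f : ℕ → X → X} {g : X → X}

lemma CollectivelyConverges.exists_dist_nds_lt (hcoll : CollectivelyConverges f g) {ε : ℝ}
    (hε : 0 < ε) : ∃ ρ, ∀ k, 1 ≤ k → ∀ x, dist (nds f (1 + ρ) k x) (g^[k] x) < ε := by
  obtain ⟨r₀, hr₀⟩ := hcoll ε hε
  exact ⟨r₀, fun k hk x => hr₀ (1 + r₀) (by omega) k hk x⟩

lemma abs_dist_nds_sub_dist_iterate_lt {ρ : ℕ} {ε : ℝ}
    (hρ : ∀ k, 1 ≤ k → ∀ x, dist (nds f (1 + ρ) k x) (g^[k] x) < ε) {s : ℕ} (hs : 1 ≤ s)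
    (x y : X) :
    |dist (nds f 1 (ρ + s) x) (nds f 1 (ρ + s) y) -
      dist (g^[s] (nds f 1 ρ x)) (g^[s] (nds f 1 ρ y))| < 2 * ε := by
  rw [← Real.dist_eq, nds_add, nds_add]
  calc _ ≤ _ := dist_dist_dist_le _ _ _ _
    _ < ε + ε := add_lt_add (hρ s hs _) (hρ s hs _)
    _ = 2 * ε := by ring

lemma mapTransitive_of_collectivelyConverges [∀ x : X, (𝓝[≠] x).NeBot]
    (htrans : NDSTransitive f) (hcont : ∀ n, 1 ≤ n → Continuous (f n))
    (hsurj : ∀ n, 1 ≤ n → Function.Surjective (f n)) (hcoll : CollectivelyConverges f g) :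
    MapTransitive g := by
  intro A B hA hAne hB ⟨b, hb⟩
  obtain ⟨γ, hγ, hball⟩ := Metric.isOpen_iff.1 hB b hb
  obtain ⟨ρ, hρ⟩ := hcoll.exists_dist_nds_lt (half_pos hγ)
  obtain ⟨k, hk, _, ⟨x, hx, rfl⟩, hxb⟩ := htrans.exists_image_nds_inter_nonempty hcont hsurj ρ
    hA hAne Metric.isOpen_ball ⟨b, Metric.mem_ball_self (half_pos hγ)⟩
  refine ⟨k, hk, g^[k] x, mem_image_of_mem _ hx, hball ?_⟩
  calc dist (g^[k] x) b ≤ dist (g^[k] x) (nds f (1 + ρ) k x) + dist (nds f (1 + ρ) k x) b :=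
        dist_triangle _ _ _
    _ < γ / 2 + γ / 2 := add_lt_add (by rw [dist_comm]; exact hρ k hk x) hxb
    _ = γ := add_halves γ

lemma thickSet_dist_iterate_gt {δ ε : ℝ}
    (hthick : ∀ U : Set X, IsOpen U → U.Nonempty → ThickSet (SensSet f U δ))
    (hcont : ∀ n, 1 ≤ n → Continuous (f n)) (hsurj : ∀ n, 1 ≤ n → Function.Surjective (f n))
    {ρ : ℕ} (hρ : ∀ k, 1 ≤ k → ∀ x, dist (nds f (1 + ρ) k x) (g^[k] x) < ε) {V : Set X}
    (hV : IsOpen V) (hVne : V.Nonempty) :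
    ThickSet {s | 1 ≤ s ∧ ∃ a ∈ V, ∃ b ∈ V, δ - 2 * ε < dist (g^[s] a) (g^[s] b)} := by
  intro p
  obtain ⟨n, hrun⟩ := hthick _ (hV.preimage (continuous_nds hcont le_rfl ρ))
    (hVne.preimage (surjective_nds hsurj le_rfl ρ)) (p + ρ + 1)
  refine ⟨max n (ρ + 1) - ρ, fun s hs₁ hs₂ => ?_⟩
  obtain ⟨-, x, hx, y, hy, hxy⟩ := hrun (ρ + s) (by omega) (by omega)
  have hclose := abs_sub_lt_iff.1 (abs_dist_nds_sub_dist_iterate_lt hρ (by omega : 1 ≤ s) x y)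
  exact ⟨by omega, _, hx, _, hy, by linarith [hclose.1]⟩

end CollectiveConvergence

lemma NDSThicklySensitive.nhdsNE_neBot {X : Type*} [MetricSpace X] {f : ℕ → X → X}
    (hts : NDSThicklySensitive f) (x : X) : (𝓝[≠] x).NeBot := by
  obtain ⟨δ, hδ, hthick⟩ := hts
  refine ⟨fun hx => ?_⟩
  obtain ⟨n, hn⟩ := hthick {x} ((isOpen_singleton_iff_punctured_nhds x).2 hx)
    (singleton_nonempty x) 0
  obtain ⟨-, _, rfl, _, rfl, hd⟩ := hn n le_rfl le_self_add
  rw [dist_self] at hd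
  linarith

theorem thicklySensitive_transitive_implies_multiSensitive_general {X : Type*} [MetricSpace X]
    (f : ℕ → X → X) (F : X → X)
    (hcont : ∀ n : ℕ, 1 ≤ n → Continuous (f n))
    (hfo : FeebleOpen f)
    (hsurj : ∀ n : ℕ, 1 ≤ n → Function.Surjective (f n))
    (hF : Continuous F)
    (hcoll : CollectivelyConverges f F)
    (hts : NDSThicklySensitive f) (htrans : NDSTransitive f) :
    NDSMultiSensitive f := by
  have := hts.nhdsNE_neBot
  have hFtrans := mapTransitive_of_collectivelyConverges htrans hcont hsurj hcoll
  obtain ⟨δ, hδ, hthick⟩ := hts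
  obtain ⟨ρ, hρ⟩ := hcoll.exists_dist_nds_lt (by positivity : 0 < δ / 8)
  refine ⟨δ / 2, half_pos hδ, fun m hm U hU hUne => ?_⟩
  have : Nonempty X := ⟨(hUne ⟨0, hm⟩).some⟩
  obtain ⟨W, hW, hWne, k, hk⟩ := hFtrans.exists_isOpen_mapsTo_iterate hF
    (fun i => interior (nds f 1 ρ '' U i)) (fun _ => isOpen_interior)
    (fun i => hfo.interior_image_nds_nonempty le_rfl ρ (hU i) (hUne i)) Finset.univ
  obtain ⟨M, hMrun⟩ := thickSet_dist_iterate_gt hthick hcont hsurj hρ hW hWne (Finset.univ.sup k)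
  refine ⟨ρ + M, mem_iInter.2 fun i => ?_⟩
  have hki : k i ≤ Finset.univ.sup k := Finset.le_sup (Finset.mem_univ i)
  obtain ⟨-, a, ha, b, hb, hab⟩ := hMrun (M + k i) le_self_add (by omega)
  have hM : 1 ≤ M := (hMrun M le_rfl le_self_add).1
  obtain ⟨x, hx, hxa⟩ := interior_subset (hk i (Finset.mem_univ i) ha)
  obtain ⟨y, hy, hyb⟩ := interior_subset (hk i (Finset.mem_univ i) hb)
  rw [Function.iterate_add_apply, Function.iterate_add_apply, ← hxa, ← hyb] at hab
  have hclose := abs_sub_lt_iff.1 (abs_dist_nds_sub_dist_iterate_lt hρ hM x y)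
  exact ⟨by omega, x, hx, y, hy, by linarith [hclose.2]⟩

theorem thicklySensitive_transitive_implies_multiSensitive {X : Type*} [MetricSpace X]
    [CompactSpace X]
    (f : ℕ → X → X) (F : X → X)
    (hcont : ∀ n : ℕ, 1 ≤ n → Continuous (f n))
    (hfo : FeebleOpen f)
    (hsurj : ∀ n : ℕ, 1 ≤ n → Function.Surjective (f n))
    (hF : Continuous F)
    (hunif : TendstoUniformly (fun n x => f n x) F Filter.atTop)
    (hcoll : CollectivelyConverges f F)
    (hts : NDSThicklySensitive f) (htrans : NDSTransitive f) :
    NDSMultiSensitive f :=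
  thicklySensitive_transitive_implies_multiSensitive_general f F hcont hfo hsurj hF hcoll hts htrans
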